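/- arXiv:2001.08932 — 4 statements merged into one kernel-verified Lean document; each statement's English description precedes it below -/
import Mathlib

section
/- For every n ≥ 1, the enhanced power graph of the group U_{6n} = ⟨a, b : a^{2n} = b^3 = e, ba = ab^{-1}⟩ is a perfect graph. -/
/-- The enhanced power graph of a group `G`: distinct `x, y` are adjacent iff they lie in a
common cyclic subgroup of `G`. -/
def enhancedPowerGraph (G : Type*) [Group G] : SimpleGraph G where
  Adj x y := x ≠ y ∧ ∃ z : G, x ∈ Subgroup.zpowers z ∧ y ∈ Subgroup.zpowers z
  symm := by
    constructor
    rintro x y ⟨hxy, z, hx, hy⟩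
    exact ⟨hxy.symm, z, hy, hx⟩
  loopless := by
    constructor
    rintro x ⟨hx, -⟩
    exact hx rfl

/-- The minimum degree of a finite graph. -/
noncomputable def minDeg {V : Type*} [Fintype V] (g : SimpleGraph V) : ℕ :=
  sInf {k | ∃ v : V, (g.neighborSet v).ncard = k}

/-- A set of vertices is independent if no two of its members are adjacent. -/
def IsIndepSet' {V : Type*} (g : SimpleGraph V) (s : Set V) : Prop :=
  s.Pairwise fun x y => ¬ g.Adj x y

/-- The independence number. -/
noncomputable def indepNum {V : Type*} (g : SimpleGraph V) : ℕ :=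
  sSup {k | ∃ s : Set V, IsIndepSet' g s ∧ s.ncard = k}

/-- A matching: a set of edges of `g`, no two of which share a vertex. -/
def IsMatching' {V : Type*} (g : SimpleGraph V) (M : Set (Sym2 V)) : Prop :=
  M ⊆ g.edgeSet ∧ M.Pairwise fun e f => ∀ v : V, v ∈ e → v ∉ f

/-- The matching number. -/
noncomputable def matchingNum {V : Type*} (g : SimpleGraph V) : ℕ :=
  sSup {k | ∃ M : Set (Sym2 V), IsMatching' g M ∧ M.ncard = k}

/-- An edge cover: a set of edges such that every vertex is incident to some edge of it. -/
def IsEdgeCover {V : Type*} (g : SimpleGraph V) (E : Set (Sym2 V)) : Prop :=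
  E ⊆ g.edgeSet ∧ ∀ v : V, ∃ e ∈ E, v ∈ e

/-- The edge covering number. -/
noncomputable def edgeCoverNum {V : Type*} (g : SimpleGraph V) : ℕ :=
  sInf {k | ∃ E : Set (Sym2 V), IsEdgeCover g E ∧ E.ncard = k}

/-- A vertex cover: a set of vertices containing an endpoint of every edge. -/
def IsVertexCover {V : Type*} (g : SimpleGraph V) (s : Set V) : Prop :=
  ∀ ⦃x y : V⦄, g.Adj x y → x ∈ s ∨ y ∈ s

/-- The vertex covering number. -/
noncomputable def vertexCoverNum {V : Type*} (g : SimpleGraph V) : ℕ :=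
  sInf {k | ∃ s : Set V, IsVertexCover g s ∧ s.ncard = k}

/-- The edge connectivity: the least size of a set of edges whose deletion disconnects. -/
noncomputable def edgeConnectivity {V : Type*} (g : SimpleGraph V) : ℕ :=
  sInf {k | ∃ S : Set (Sym2 V), S ⊆ g.edgeSet ∧ ¬ (g.deleteEdges S).Connected ∧ S.ncard = k}

/-- The strong metric dimension. -/
noncomputable def sdim {V : Type*} (g : SimpleGraph V) : ℕ :=
  sInf {k | ∃ U : Set V,
    (∀ u v : V, u ≠ v → ∃ z ∈ U,
      g.dist z u = g.dist z v + g.dist v u ∨ g.dist z v = g.dist z u + g.dist u v) ∧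
    U.ncard = k}

/-- The clique number. -/
noncomputable def cliqueNum' {V : Type*} (g : SimpleGraph V) : ℕ :=
  sSup {k | ∃ s : Finset V, g.IsNClique k s}

/-- A graph is perfect if every induced subgraph has chromatic number equal to clique number. -/
def IsPerfect {V : Type*} (g : SimpleGraph V) : Prop :=
  ∀ s : Set V, (g.induce s).chromaticNumber = (cliqueNum' (g.induce s) : ℕ∞)

/-- `H` is a maximal cyclic subgroup of `G`. -/
def IsMaximalCyclic {G : Type*} [Group G] (H : Subgroup G) : Prop :=
  (∃ g : G, H = Subgroup.zpowers g) ∧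
    ∀ K : Subgroup G, (∃ g : G, K = Subgroup.zpowers g) → H ≤ K → H = K


/-!
For `x : G` let `S x` be the set of maximal cyclic subgroups containing `x`; distinct `x`, `y`
are adjacent in the enhanced power graph iff `S x` and `S y` meet. When any two meeting sets
`S x`, `S y` are nested, order the vertices by `S` (ties broken arbitrarily): each vertex
together with the vertices above it is a clique, so colouring a vertex by the number of vertices
above it uses at most `ω` colours, on every induced subgraph.

In `U_{6n}` the centralizer `C` of `b` has index two. An element outside `C` lies in exactly
one maximal cyclic subgroup, some `⟨b ^ i * a⟩`, and that subgroup contains every `z` with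
`x ∈ ⟨z⟩`. Writing `n = 3 ^ e * m` with `3 ∤ m`, the central element `q = a ^ (2 * 3 ^ e)`
has order dividing `m`, and a Bézout argument puts it in every maximal cyclic subgroup. Finally,
for `x = z ^ i` and `y = z ^ j` with `z ∈ C`, the one whose exponent has the smaller gcd with
`3 ^ (e + 1)` generates the other together with `z ^ 3 ^ (e + 1) ∈ ⟨q⟩`.
-/

namespace SimpleGraph

variable {V : Type*} {g : SimpleGraph V}

open Finset in
theorem colorable_cliqueNum_of_isStrictOrder [Finite V] (r : V → V → Prop) [IsStrictOrder V r]
    (hadj : ∀ ⦃x y⦄, g.Adj x y → r x y ∨ r y x)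
    (hclique : ∀ v, g.IsClique (insert v {x | r x v})) :
    g.Colorable g.cliqueNum := by
  classical
  have := Fintype.ofFinite V
  let below (v : V) : Finset V := {x | r x v}
  have card_below_lt {u v : V} (huv : r u v) : #(below u) < #(below v) := by
    refine Finset.card_lt_card ((Finset.ssubset_iff_of_subset fun x hx => ?_).2 ⟨u, ?_, ?_⟩)
    · simp only [below, Finset.mem_filter, Finset.mem_univ, true_and] at hx ⊢
      exact _root_.trans hx huv
    · simpa [below] using huv
    · simpa [below] using irrefl u
  refine ⟨Coloring.mk (fun v => ⟨#(below v), ?_⟩) fun {u v} huv hc => ?_⟩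
  · have hv : v ∉ below v := by simpa [below] using irrefl v
    have hcl : g.IsClique (insert v (below v) : Finset V) := by simpa [below] using hclique v
    simpa [Finset.card_insert_of_notMem hv] using IsClique.card_le_cliqueNum (tc := hcl)
  · have hc : #(below u) = #(below v) := congrArg Fin.val hc
    rcases hadj huv with h | h
    · exact (card_below_lt h).ne hc
    · exact (card_below_lt h).ne' hc

variable {ι : Type*} {S : V → Set ι}

theorem colorable_cliqueNum_of_laminar [Finite V] (hS : ∀ v, (S v).Nonempty)
    (hadj : ∀ x y, g.Adj x y ↔ x ≠ y ∧ (S x ∩ S y).Nonempty)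
    (hlam : ∀ x y, (S x ∩ S y).Nonempty → S x ⊆ S y ∨ S y ⊆ S x) :
    g.Colorable g.cliqueNum := by
  obtain ⟨k, ⟨e⟩⟩ := Finite.exists_equiv_fin V
  let above (x v : V) : Prop := S v ⊂ S x ∨ (S x = S v ∧ e x < e v)
  have : IsStrictOrder V above :=
    { irrefl := by rintro x (h | ⟨-, h⟩) <;> exact irrefl _ h
      trans := by
        rintro x y z (hxy | ⟨hxy, hxy'⟩) (hyz | ⟨hyz, hyz'⟩)
        · exact .inl (hyz.trans hxy)
        · exact .inl (hyz ▸ hxy)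
        · exact .inl (hxy ▸ hyz)
        · exact .inr ⟨hxy.trans hyz, hxy'.trans hyz'⟩ }
  refine colorable_cliqueNum_of_isStrictOrder above (fun x y hxy => ?_) fun v => ?_
  · obtain ⟨hne, hxy⟩ := (hadj x y).1 hxy
    have hne : e x ≠ e y := e.injective.ne hne
    by_cases hS : S x = S y
    · exact (lt_or_gt_of_ne hne).imp (fun h => .inr ⟨hS, h⟩) fun h => .inr ⟨hS.symm, h⟩
    · exact (hlam x y hxy).symm.imp (fun h => .inl (h.ssubset_of_ne (Ne.symm hS)))
        fun h => .inl (h.ssubset_of_ne hS)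
  · have hsub : ∀ u ∈ insert v {x | above x v}, S v ⊆ S u := by
      rintro u (rfl | (h | ⟨h, -⟩))
      exacts [subset_rfl, h.subset, h.symm.subset]
    exact fun u hu w hw huw =>
      (hadj u w).2 ⟨huw, (hS v).mono (Set.subset_inter (hsub u hu) (hsub w hw))⟩

theorem isPerfect_of_laminar [Finite V] (hS : ∀ v, (S v).Nonempty)
    (hadj : ∀ x y, g.Adj x y ↔ x ≠ y ∧ (S x ∩ S y).Nonempty)
    (hlam : ∀ x y, (S x ∩ S y).Nonempty → S x ⊆ S y ∨ S y ⊆ S x) :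
    IsPerfect g := fun s =>
  have hcol : (g.induce s).Colorable (g.induce s).cliqueNum :=
    colorable_cliqueNum_of_laminar (S := S ∘ Subtype.val) (fun v => hS v)
      (fun x y => by simp [hadj, Subtype.ext_iff]) fun x y => hlam x y
  le_antisymm hcol.chromaticNumber_le cliqueNum_le_chromaticNumber

end SimpleGraph

open Subgroup

section MaximalCyclic

variable {G : Type*} [Group G]

theorem exists_isMaximalCyclic_mem [Finite G] (x : G) :
    ∃ H : Subgroup G, IsMaximalCyclic H ∧ x ∈ H := by
  obtain ⟨H, hxH, hH⟩ :=
    Finite.exists_le_maximal (p := fun K : Subgroup G => ∃ g, K = zpowers g) ⟨x, rfl⟩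
  exact ⟨H, ⟨hH.prop, fun K hK hHK => le_antisymm hHK (hH.le_of_ge hK hHK)⟩,
    hxH (mem_zpowers x)⟩

theorem enhancedPowerGraph_adj_iff [Finite G] {x y : G} :
    (enhancedPowerGraph G).Adj x y ↔
      x ≠ y ∧ ∃ H : Subgroup G, IsMaximalCyclic H ∧ x ∈ H ∧ y ∈ H := by
  refine and_congr_right fun _ => ⟨fun ⟨z, hx, hy⟩ => ?_, fun ⟨H, hH, hx, hy⟩ => ?_⟩
  · obtain ⟨H, hH, hz⟩ := exists_isMaximalCyclic_mem z
    exact ⟨H, hH, zpowers_le.2 hz hx, zpowers_le.2 hz hy⟩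
  · obtain ⟨z, rfl⟩ := hH.1
    exact ⟨z, hx, hy⟩

theorem isPerfect_enhancedPowerGraph_of_nested [Finite G]
    (h : ∀ z x y : G, x ∈ zpowers z → y ∈ zpowers z →
      (∀ H, IsMaximalCyclic H → x ∈ H → y ∈ H) ∨
        (∀ H, IsMaximalCyclic H → y ∈ H → x ∈ H)) :
    IsPerfect (enhancedPowerGraph G) := by
  refine SimpleGraph.isPerfect_of_laminar (S := fun x => {H | IsMaximalCyclic H ∧ x ∈ H})
    exists_isMaximalCyclic_mem (fun x y => ?_) fun x y ⟨H, ⟨hH, hx⟩, _, hy⟩ => ?_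
  · rw [enhancedPowerGraph_adj_iff]
    exact and_congr_right fun _ => exists_congr fun H => by
      simp only [Set.mem_inter_iff, Set.mem_ofPred_eq]; tauto
  · obtain ⟨z, rfl⟩ := hH.1
    exact (h z x y hx hy).imp (fun h K hK => ⟨hK.1, h K hK.1 hK.2⟩)
      fun h K hK => ⟨hK.1, h K hK.1 hK.2⟩

theorem zpow_mem_iff_even {H : Subgroup G} {z : G} (h2 : z ^ 2 ∈ H) (h1 : z ∉ H) (k : ℤ) :
    z ^ k ∈ H ↔ Even k := by
  obtain ⟨l, rfl | rfl⟩ := Int.even_or_odd' k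
  · simpa [zpow_mul] using zpow_mem h2 l
  · rw [zpow_add, zpow_mul, zpow_one, mul_mem_cancel_left (zpow_mem (by exact_mod_cast h2) l)]
    simpa only [Int.not_even_two_mul_add_one, iff_false] using h1

theorem zpow_mem_of_gcd_dvd {H : Subgroup G} {z : G} {i k j : ℤ} (hi : z ^ i ∈ H)
    (hk : z ^ k ∈ H) (hj : (i.gcd k : ℤ) ∣ j) : z ^ j ∈ H := by
  obtain ⟨c, rfl⟩ := hj
  rw [Int.gcd_eq_gcd_ab, add_mul, zpow_add, mul_assoc, mul_assoc, zpow_mul z i, zpow_mul z k]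
  exact mul_mem (zpow_mem hi _) (zpow_mem hk _)

theorem mem_imp_or_mem_imp_of_mem_zpowers {p : ℕ} (hp : p.Prime) (k : ℕ) {z x y : G}
    (hx : x ∈ zpowers z) (hy : y ∈ zpowers z) :
    (∀ H : Subgroup G, z ^ p ^ k ∈ H → x ∈ H → y ∈ H) ∨
      (∀ H : Subgroup G, z ^ p ^ k ∈ H → y ∈ H → x ∈ H) := by
  obtain ⟨i, rfl⟩ := hx
  obtain ⟨j, rfl⟩ := hy
  have hdvd (l : ℤ) : l.gcd (p ^ k : ℕ) ∣ p ^ k := Int.gcd_dvd_natAbs_right ..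
  obtain ⟨α, -, hα⟩ := (Nat.dvd_prime_pow hp).1 (hdvd i)
  obtain ⟨β, -, hβ⟩ := (Nat.dvd_prime_pow hp).1 (hdvd j)
  have hpk : z ^ p ^ k = z ^ ((p ^ k : ℕ) : ℤ) := (zpow_natCast z _).symm
  rcases le_total α β with hαβ | hβα
  · refine .inl fun H hH hi => zpow_mem_of_gcd_dvd hi (hpk ▸ hH) ?_
    exact (Int.natCast_dvd_natCast.2 (hα ▸ hβ ▸ pow_dvd_pow p hαβ)).trans
      (Int.gcd_dvd_left ..)
  · refine .inr fun H hH hj => zpow_mem_of_gcd_dvd hj (hpk ▸ hH) ?_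
    exact (Int.natCast_dvd_natCast.2 (hα ▸ hβ ▸ pow_dvd_pow p hβα)).trans
      (Int.gcd_dvd_left ..)

theorem mem_zpowers_mul_of_coprime {u q : G} {K m : ℕ} (huq : Commute u q) (hu : u ^ K = 1)
    (hq : q ^ m = 1) (hKm : K.Coprime m) : u ∈ zpowers (u * q) ∧ q ∈ zpowers (u * q) := by
  have hbez : (K : ℤ) * K.gcdA m + m * K.gcdB m = 1 := by
    rw [← Nat.gcd_eq_gcd_ab, hKm, Nat.cast_one]
  refine ⟨⟨m * K.gcdB m, ?_⟩, ⟨K * K.gcdA m, ?_⟩⟩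
  · simp only [huq.mul_zpow, zpow_mul q, zpow_natCast, hq, one_zpow, mul_one]
    rw [show (m : ℤ) * K.gcdB m = 1 - K * K.gcdA m by linarith, zpow_sub, zpow_one, zpow_mul,
      zpow_natCast, hu, one_zpow, inv_one, mul_one]
  · simp only [huq.mul_zpow, zpow_mul u, zpow_natCast, hu, one_zpow, one_mul]
    rw [show (K : ℤ) * K.gcdA m = 1 - m * K.gcdB m by linarith, zpow_sub, zpow_one, zpow_mul,
      zpow_natCast, hq, one_zpow, inv_one, mul_one]

theorem exists_mem_zpowers_of_coprime {w q : G} {K m : ℕ} (hwq : Commute w q) (hq : q ^ m = 1)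
    (hw : w ^ K ∈ zpowers q) (hKm : K.Coprime m) :
    ∃ t : G, w ∈ zpowers t ∧ q ∈ zpowers t := by
  have hbez : (K : ℤ) * K.gcdA m + m * K.gcdB m = 1 := by
    rw [← Nat.gcd_eq_gcd_ab, hKm, Nat.cast_one]
  set u := w ^ ((m : ℤ) * K.gcdB m)
  have hu : u ^ K = 1 := by
    have hwKm : (w ^ K) ^ m = 1 := orderOf_dvd_iff_pow_eq_one.1
      ((orderOf_dvd_of_mem_zpowers hw).trans (orderOf_dvd_of_pow_eq_one hq))
    rw [← zpow_natCast, ← zpow_mul, mul_comm, ← mul_assoc, zpow_mul, ← Nat.cast_mul,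
      zpow_natCast, pow_mul, hwKm, one_zpow]
  obtain ⟨hut, hqt⟩ := mem_zpowers_mul_of_coprime (hwq.zpow_left _) hu hq hKm
  refine ⟨u * q, ?_, hqt⟩
  have hwu : w = (w ^ K) ^ K.gcdA m * u := by
    rw [← zpow_natCast, ← zpow_mul, ← zpow_add, hbez, zpow_one]
  rw [hwu]
  exact mul_mem (zpow_mem (zpowers_le.2 hqt hw) _) hut

end MaximalCyclic

/-- `a` and `b` satisfy the defining relations of `U_{6n}`, generate `G`, and `|G| = 6n`;
together these force `G ≅ U_{6n}` with `a`, `b` the standard generators. -/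
structure IsU6nPresentation {G : Type*} [Group G] (n : ℕ) (a b : G) : Prop where
  pow_a : a ^ (2 * n) = 1
  pow_b : b ^ 3 = 1
  b_mul_a : b * a = a * b⁻¹
  card : Nat.card G = 6 * n
  closure_eq_top : closure {a, b} = ⊤

namespace IsU6nPresentation

variable {G : Type*} [Group G] {n : ℕ} {a b : G}

theorem a_mul_b_mul_a_inv (h : IsU6nPresentation n a b) : a * b * a⁻¹ = b⁻¹ := by
  have h1 : b * a⁻¹ = a⁻¹ * b⁻¹ := by simpa using congrArg (·⁻¹) h.b_mul_a.symm
  rw [mul_assoc, h1, mul_inv_cancel_left]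

theorem commute_a_sq_b (h : IsU6nPresentation n a b) : Commute (a ^ 2) b := by
  have hab : a * b = b⁻¹ * a := by rw [← h.a_mul_b_mul_a_inv, inv_mul_cancel_right]
  calc a ^ 2 * b = a * (a * b) := by rw [sq, mul_assoc]
    _ = a * b⁻¹ * a := by rw [hab, mul_assoc]
    _ = b * a ^ 2 := by rw [← h.b_mul_a, sq, mul_assoc]

theorem zpowers_b_normal [Finite G] (h : IsU6nPresentation n a b) : (zpowers b).Normal := by
  rw [← normalizer_eq_top_iff, eq_top_iff, ← h.closure_eq_top, closure_le]
  rintro x (rfl | rfl) <;> refine mem_normalizer_fintype ?_ <;> rintro _ ⟨i, rfl⟩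
  · exact ⟨-i, by rw [← conj_zpow, h.a_mul_b_mul_a_inv, inv_zpow']⟩
  · exact ⟨i, by group⟩

theorem exists_eq_b_zpow_mul_a_zpow [Finite G] (h : IsU6nPresentation n a b) (g : G) :
    ∃ i j : ℤ, g = b ^ i * a ^ j := by
  have := h.zpowers_b_normal
  have hg : g ∈ zpowers b ⊔ zpowers a := by
    rw [zpowers_eq_closure, zpowers_eq_closure, ← Subgroup.closure_union, Set.singleton_union,
      Set.pair_comm, h.closure_eq_top]
    exact mem_top g
  obtain ⟨_, ⟨i, rfl⟩, _, ⟨j, rfl⟩, rfl⟩ := mem_sup_of_normal_left.1 hg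
  exact ⟨i, j, rfl⟩

theorem n_pos [Finite G] (h : IsU6nPresentation n a b) : 0 < n := by
  have := h.card ▸ Nat.card_pos (α := G)
  omega

theorem bijective_mul [Finite G] (h : IsU6nPresentation n a b) :
    Function.Bijective fun p : zpowers b × zpowers a => (p.1 : G) * p.2 := by
  refine Function.Surjective.bijective_of_nat_card_le (fun g => ?_) ?_
  · obtain ⟨i, j, rfl⟩ := h.exists_eq_b_zpow_mul_a_zpow g
    exact ⟨(⟨b ^ i, zpow_mem_zpowers b i⟩, ⟨a ^ j, zpow_mem_zpowers a j⟩), rfl⟩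
  · have hb := orderOf_le_of_pow_eq_one (by norm_num) h.pow_b
    have ha := orderOf_le_of_pow_eq_one (by have := h.n_pos; omega) h.pow_a
    rw [Nat.card_prod, Nat.card_zpowers, Nat.card_zpowers, h.card]
    nlinarith

theorem b_ne_one [Finite G] (h : IsU6nPresentation n a b) : b ≠ 1 := by
  intro hb
  have hcard := Nat.card_congr (Equiv.ofBijective _ h.bijective_mul)
  rw [Nat.card_prod, Nat.card_zpowers, Nat.card_zpowers, hb, orderOf_one, one_mul, h.card] at hcard
  have hn := h.n_pos
  have ha := orderOf_le_of_pow_eq_one (by omega) h.pow_a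
  omega

theorem b_zpow_eq_of_mul_eq [Finite G] (h : IsU6nPresentation n a b) {i j k l : ℤ}
    (hmul : b ^ i * a ^ j = b ^ k * a ^ l) : b ^ i = b ^ k :=
  congrArg (fun p : zpowers b × zpowers a => (p.1 : G))
    (h.bijective_mul.1 (a₁ := (⟨_, zpow_mem_zpowers b i⟩, ⟨_, zpow_mem_zpowers a j⟩))
      (a₂ := (⟨_, zpow_mem_zpowers b k⟩, ⟨_, zpow_mem_zpowers a l⟩)) hmul)

theorem a_notMem_centralizer [Finite G] (h : IsU6nPresentation n a b) : a ∉ centralizer {b} := by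
  intro ha
  have hb : b = b⁻¹ := mul_left_cancel ((mem_centralizer_singleton_iff.1 ha).trans h.b_mul_a)
  refine h.b_ne_one ?_
  calc b = b ^ 3 * (b * b)⁻¹ := by group
    _ = 1 := by rw [h.pow_b]; nth_rw 2 [hb]; simp

theorem a_sq_mem_centralizer (h : IsU6nPresentation n a b) : a ^ 2 ∈ centralizer {b} :=
  mem_centralizer_singleton_iff.2 h.commute_a_sq_b.eq

theorem commute_a_sq [Finite G] (h : IsU6nPresentation n a b) (g : G) : Commute (a ^ 2) g := by
  obtain ⟨i, j, rfl⟩ := h.exists_eq_b_zpow_mul_a_zpow g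
  exact (h.commute_a_sq_b.zpow_right i).mul_right ((Commute.self_pow a 2).symm.zpow_right j)

theorem b_zpow_mul_a_zpow_mem_centralizer_iff [Finite G] (h : IsU6nPresentation n a b) (i j : ℤ) :
    b ^ i * a ^ j ∈ centralizer {b} ↔ Even j := by
  rw [mul_mem_cancel_left (zpow_mem (mem_centralizer_singleton_iff.2 rfl) i)]
  exact zpow_mem_iff_even h.a_sq_mem_centralizer h.a_notMem_centralizer j

theorem b_zpow_mul_a_sq (h : IsU6nPresentation n a b) (i : ℤ) : (b ^ i * a) ^ 2 = a ^ 2 := by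
  calc (b ^ i * a) ^ 2 = b ^ i * (a * b * a⁻¹) ^ i * a ^ 2 := by rw [conj_zpow, sq]; group
    _ = a ^ 2 := by rw [h.a_mul_b_mul_a_inv, inv_zpow', ← zpow_add, add_neg_cancel, zpow_zero,
      one_mul]

theorem b_zpow_mul_a_zpow_two_mul_add_one (h : IsU6nPresentation n a b) (i k : ℤ) :
    (b ^ i * a) ^ (2 * k + 1) = b ^ i * a ^ (2 * k + 1) := by
  have hcomm : Commute (a ^ (2 * k)) (b ^ i) := by
    rw [zpow_mul, zpow_ofNat]
    exact (h.commute_a_sq_b.zpow_left k).zpow_right i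
  rw [zpow_add_one, zpow_mul, zpow_ofNat, h.b_zpow_mul_a_sq, ← zpow_ofNat, ← zpow_mul,
    ← mul_assoc, hcomm.eq, mul_assoc, ← zpow_add_one]

theorem zpow_b_zpow_mul_a_mem_centralizer_iff [Finite G] (h : IsU6nPresentation n a b) (i t : ℤ) :
    (b ^ i * a) ^ t ∈ centralizer {b} ↔ Even t := by
  refine zpow_mem_iff_even (h.b_zpow_mul_a_sq i ▸ h.a_sq_mem_centralizer) (fun hc => ?_) t
  simpa using (h.b_zpow_mul_a_zpow_mem_centralizer_iff i 1).1 (by rwa [zpow_one])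

theorem exists_mem_zpowers_b_zpow_mul_a [Finite G] (h : IsU6nPresentation n a b) {z : G}
    (hz : z ∉ centralizer {b}) : ∃ i : ℤ, z ∈ zpowers (b ^ i * a) := by
  obtain ⟨i, j, rfl⟩ := h.exists_eq_b_zpow_mul_a_zpow z
  obtain ⟨k, rfl⟩ :=
    Int.not_even_iff_odd.1 ((h.b_zpow_mul_a_zpow_mem_centralizer_iff i j).not.1 hz)
  exact ⟨i, 2 * k + 1, h.b_zpow_mul_a_zpow_two_mul_add_one i k⟩

theorem exists_eq_b_zpow_mul_a_zpow_of_mem_zpowers [Finite G] (h : IsU6nPresentation n a b)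
    {i : ℤ} {x : G} (hx : x ∈ zpowers (b ^ i * a)) (hxC : x ∉ centralizer {b}) :
    ∃ j : ℤ, x = b ^ i * a ^ j := by
  obtain ⟨t, rfl⟩ := hx
  obtain ⟨k, rfl⟩ :=
    Int.not_even_iff_odd.1 ((h.zpow_b_zpow_mul_a_mem_centralizer_iff i t).not.1 hxC)
  exact ⟨2 * k + 1, h.b_zpow_mul_a_zpow_two_mul_add_one i k⟩

theorem mem_zpowers_a_sq_of_mem_zpowers [Finite G] (h : IsU6nPresentation n a b) {i : ℤ} {x : G}
    (hx : x ∈ zpowers (b ^ i * a)) (hxC : x ∈ centralizer {b}) : x ∈ zpowers (a ^ 2) := by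
  obtain ⟨t, rfl⟩ := hx
  obtain ⟨k, rfl⟩ := (h.zpow_b_zpow_mul_a_mem_centralizer_iff i t).1 hxC
  exact ⟨k, by simp only [← two_mul, zpow_mul, zpow_ofNat, h.b_zpow_mul_a_sq]⟩

theorem eq_zpowers_of_isMaximalCyclic [Finite G] (h : IsU6nPresentation n a b) {W : Subgroup G}
    {i : ℤ} {x : G} (hW : IsMaximalCyclic W) (hxW : x ∈ W) (hx : x ∈ zpowers (b ^ i * a))
    (hxC : x ∉ centralizer {b}) : W = zpowers (b ^ i * a) := by
  obtain ⟨w, rfl⟩ := hW.1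
  obtain ⟨i', hw⟩ := h.exists_mem_zpowers_b_zpow_mul_a fun hw => hxC (zpowers_le.2 hw hxW)
  have hW' : zpowers w = zpowers (b ^ i' * a) := hW.2 _ ⟨_, rfl⟩ (zpowers_le.2 hw)
  obtain ⟨j, rfl⟩ := h.exists_eq_b_zpow_mul_a_zpow_of_mem_zpowers hx hxC
  obtain ⟨j', hj'⟩ := h.exists_eq_b_zpow_mul_a_zpow_of_mem_zpowers (hW' ▸ hxW) hxC
  rw [hW', h.b_zpow_eq_of_mul_eq hj']

theorem mem_of_isMaximalCyclic_of_notMem_centralizer [Finite G] (h : IsU6nPresentation n a b)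
    {W : Subgroup G} {x z : G} (hW : IsMaximalCyclic W) (hxW : x ∈ W)
    (hxC : x ∉ centralizer {b}) (hxz : x ∈ zpowers z) : z ∈ W := by
  obtain ⟨i, hz⟩ := h.exists_mem_zpowers_b_zpow_mul_a fun hz => hxC (zpowers_le.2 hz hxz)
  rw [h.eq_zpowers_of_isMaximalCyclic hW hxW (zpowers_le.2 hz hxz) hxC]
  exact hz

theorem pow_mem_zpowers_of_mem_centralizer [Finite G] (h : IsU6nPresentation n a b) (e : ℕ)
    {w : G} (hw : w ∈ centralizer {b}) : w ^ 3 ^ (e + 1) ∈ zpowers (a ^ (2 * 3 ^ e)) := by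
  obtain ⟨i, j, rfl⟩ := h.exists_eq_b_zpow_mul_a_zpow w
  obtain ⟨k, rfl⟩ := (h.b_zpow_mul_a_zpow_mem_centralizer_iff i j).1 hw
  have hcomm : Commute (b ^ i) (a ^ (k + k)) := by
    rw [← two_mul, zpow_mul, zpow_ofNat]
    exact ((h.commute_a_sq_b.zpow_left k).zpow_right i).symm
  have hb : (b ^ i) ^ 3 ^ (e + 1) = 1 := by
    have hb3 : (b ^ i) ^ 3 = 1 := by
      rw [← zpow_natCast, ← zpow_mul, mul_comm, zpow_mul, zpow_natCast, h.pow_b, one_zpow]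
    rw [pow_succ', pow_mul, hb3, one_pow]
  refine ⟨3 * k, ?_⟩
  simp only [hcomm.mul_pow, hb, one_mul, ← zpow_natCast, ← zpow_mul]
  congr 1
  push_cast
  ring

theorem a_pow_mem_of_isMaximalCyclic [Finite G] (h : IsU6nPresentation n a b) {e m : ℕ}
    (hn : n = 3 ^ e * m) (hm : ¬ 3 ∣ m) {W : Subgroup G} (hW : IsMaximalCyclic W) :
    a ^ (2 * 3 ^ e) ∈ W := by
  obtain ⟨w, rfl⟩ := hW.1
  by_cases hwC : w ∈ centralizer {b}
  · have hq : (a ^ (2 * 3 ^ e)) ^ m = 1 := by rw [← pow_mul, mul_assoc, ← hn, h.pow_a]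
    have hcomm : Commute w (a ^ (2 * 3 ^ e)) := by
      rw [pow_mul]
      exact ((h.commute_a_sq w).pow_left _).symm
    have hcop : (3 ^ (e + 1)).Coprime m :=
      Nat.Coprime.pow_left _ ((Nat.Prime.coprime_iff_not_dvd Nat.prime_three).2 hm)
    obtain ⟨t, hwt, hqt⟩ := exists_mem_zpowers_of_coprime hcomm hq
      (h.pow_mem_zpowers_of_mem_centralizer e hwC) hcop
    rw [hW.2 _ ⟨t, rfl⟩ (zpowers_le.2 hwt)]
    exact hqt
  · obtain ⟨i, hw⟩ := h.exists_mem_zpowers_b_zpow_mul_a hwC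
    rw [h.eq_zpowers_of_isMaximalCyclic hW (mem_zpowers w) hw hwC, pow_mul, ← h.b_zpow_mul_a_sq i]
    exact pow_mem (pow_mem (mem_zpowers _) 2) _

theorem maximalCyclic_nested_of_mem_centralizer [Finite G] (h : IsU6nPresentation n a b) {x y z : G}
    (hz : z ∈ centralizer {b}) (hx : x ∈ zpowers z) (hy : y ∈ zpowers z) :
    (∀ W, IsMaximalCyclic W → x ∈ W → y ∈ W) ∨
      (∀ W, IsMaximalCyclic W → y ∈ W → x ∈ W) := by
  obtain ⟨e, m, hm, hn⟩ := Nat.exists_eq_pow_mul_and_not_dvd h.n_pos.ne' 3 (by norm_num)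
  have hzW (W : Subgroup G) (hW : IsMaximalCyclic W) : z ^ 3 ^ (e + 1) ∈ W :=
    zpowers_le.2 (h.a_pow_mem_of_isMaximalCyclic hn hm hW)
      (h.pow_mem_zpowers_of_mem_centralizer e hz)
  exact (mem_imp_or_mem_imp_of_mem_zpowers Nat.prime_three (e + 1) hx hy).imp
    (fun hxy W hW => hxy W (hzW W hW)) fun hyx W hW => hyx W (hzW W hW)

theorem maximalCyclic_nested [Finite G] (h : IsU6nPresentation n a b) {x y z : G}
    (hx : x ∈ zpowers z) (hy : y ∈ zpowers z) :
    (∀ W, IsMaximalCyclic W → x ∈ W → y ∈ W) ∨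
      (∀ W, IsMaximalCyclic W → y ∈ W → x ∈ W) := by
  by_cases hxC : x ∈ centralizer {b}
  · by_cases hyC : y ∈ centralizer {b}
    · by_cases hzC : z ∈ centralizer {b}
      · exact h.maximalCyclic_nested_of_mem_centralizer hzC hx hy
      · obtain ⟨i, hz⟩ := h.exists_mem_zpowers_b_zpow_mul_a hzC
        exact h.maximalCyclic_nested_of_mem_centralizer h.a_sq_mem_centralizer
          (h.mem_zpowers_a_sq_of_mem_zpowers (zpowers_le.2 hz hx) hxC)
          (h.mem_zpowers_a_sq_of_mem_zpowers (zpowers_le.2 hz hy) hyC)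
    · exact .inr fun W hW hyW =>
        zpowers_le.2 (h.mem_of_isMaximalCyclic_of_notMem_centralizer hW hyW hyC hy) hx
  · exact .inl fun W hW hxW =>
      zpowers_le.2 (h.mem_of_isMaximalCyclic_of_notMem_centralizer hW hxW hxC hx) hy

end IsU6nPresentation

theorem stmt_14_general {G : Type*} [Group G] [Fintype G] (n : ℕ)
    (a b : G) (ha : a ^ (2 * n) = 1) (hb : b ^ 3 = 1) (hba : b * a = a * b⁻¹)
    (hcard : Fintype.card G = 6 * n) (hgen : Subgroup.closure {a, b} = ⊤) :
    IsPerfect (enhancedPowerGraph G) :=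
  have h : IsU6nPresentation n a b := ⟨ha, hb, hba, Nat.card_eq_fintype_card.trans hcard, hgen⟩
  isPerfect_enhancedPowerGraph_of_nested fun _ _ _ => h.maximalCyclic_nested

/-- For every `n ≥ 1`, the enhanced power graph of
`U_{6n} = ⟨a, b : a^{2n} = b³ = e, ba = ab⁻¹⟩` is a perfect graph. -/
theorem stmt_14 {G : Type*} [Group G] [Fintype G] (n : ℕ) (hn : 1 ≤ n)
    (a b : G) (ha : a ^ (2 * n) = 1) (hb : b ^ 3 = 1) (hba : b * a = a * b⁻¹)
    (hcard : Fintype.card G = 6 * n) (hgen : Subgroup.closure {a, b} = ⊤) :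
    IsPerfect (enhancedPowerGraph G) :=
  stmt_14_general n a b ha hb hba hcard hgen
end

section
/- For every n ≥ 3, the enhanced power graph of the dihedral group D_{2n} = ⟨a, b : a^n = b^2 = e, ab = ba^{-1}⟩ of order 2n is a perfect graph. -/
namespace SimpleGraph

variable {V : Type*} {G : SimpleGraph V}

theorem colorable_card_of_isIndepSet_compl {K : Finset V} (hI : G.IsIndepSet (↑K)ᶜ)
    (hK : ∀ v ∉ K, ∃ w ∈ K, ¬ G.Adj v w) : G.Colorable K.card := by
  classical
  choose! c hcK hc using hK
  let C : G.Coloring K := Coloring.mk (fun v => if hv : v ∈ K then ⟨v, hv⟩ else ⟨c v, hcK v hv⟩)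
    (by
      intro u v huv
      by_cases hu : u ∈ K <;> by_cases hv : v ∈ K <;>
        simp only [hu, hv, dite_true, dite_false, ne_eq, Subtype.mk.injEq]
      · exact huv.ne
      · rintro rfl; exact hc v hv huv.symm
      · rintro rfl; exact hc u hu huv
      · exact absurd huv (hI hu hv huv.ne))
  simpa using C.colorable

theorem chromaticNumber_eq_cliqueNum_of_isClique_of_isIndepSet_compl [Finite V]
    {K : Finset V} (hK : G.IsClique (K : Set V)) (hI : G.IsIndepSet (↑K)ᶜ) :
    G.chromaticNumber = G.cliqueNum := by
  classical
  refine le_antisymm ?_ G.cliqueNum_le_chromaticNumber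
  suffices ∃ K : Finset V, G.IsClique (K : Set V) ∧ G.Colorable K.card by
    obtain ⟨K, hK, hc⟩ := this
    exact hc.chromaticNumber_le.trans (by exact_mod_cast hK.card_le_cliqueNum)
  by_cases h : ∀ v ∉ K, ∃ w ∈ K, ¬ G.Adj v w
  · exact ⟨K, hK, colorable_card_of_isIndepSet_compl hI h⟩
  push Not at h
  obtain ⟨v, hvK, hv⟩ := h
  -- `v` is adjacent to all of `K`, so the other vertices outside `K` all miss `v`.
  refine ⟨insert v K, ?_, colorable_card_of_isIndepSet_compl ?_ ?_⟩
  · rw [Finset.coe_insert]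
    exact hK.insert fun w hw _ => hv w hw
  · exact hI.mono (by simp)
  · intro u hu
    rw [Finset.mem_insert, not_or] at hu
    exact ⟨v, Finset.mem_insert_self v K, hI hu.2 hvK hu.1⟩

end SimpleGraph

open SimpleGraph

theorem isPerfect_of_isClique_of_isIndepSet_compl {V : Type*} [Finite V] {G : SimpleGraph V}
    {K : Set V} (hK : G.IsClique K) (hI : G.IsIndepSet Kᶜ) : IsPerfect G := by
  classical
  intro s
  have : Fintype s := Fintype.ofFinite s
  refine chromaticNumber_eq_cliqueNum_of_isClique_of_isIndepSet_compl
    (K := (Subtype.val ⁻¹' K : Set s).toFinset) ?_ ?_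
  · rw [Set.coe_toFinset]
    exact fun x hx y hy hxy => hK hx hy (Subtype.val_injective.ne hxy)
  · rw [Set.coe_toFinset]
    exact fun x hx y hy hxy => hI hx hy (Subtype.val_injective.ne hxy)

section EnhancedPowerGraph

variable {G : Type*} [Group G]

theorem enhancedPowerGraph_isClique_zpowers (g : G) :
    (enhancedPowerGraph G).IsClique (Subgroup.zpowers g : Set G) :=
  fun _ hx _ hy hxy => ⟨hxy, g, hx, hy⟩

theorem eq_one_or_eq_of_mem_zpowers_of_sq_eq_one {x z : G} (hz : z ^ 2 = 1)
    (hx : x ∈ Subgroup.zpowers z) : x = 1 ∨ x = z := by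
  obtain ⟨m, rfl⟩ := Subgroup.mem_zpowers_iff.mp hx
  obtain ⟨k, rfl | rfl⟩ := Int.even_or_odd' m
  · left
    rw [zpow_mul, zpow_ofNat, hz, one_zpow]
  · right
    rw [zpow_add_one, zpow_mul, zpow_ofNat, hz, one_zpow, one_mul]

theorem enhancedPowerGraph_isIndepSet_compl_zpowers {g : G}
    (h : ∀ x ∉ Subgroup.zpowers g, x ^ 2 = 1) :
    (enhancedPowerGraph G).IsIndepSet (Subgroup.zpowers g : Set G)ᶜ := by
  have h1 : (1 : G) ∈ Subgroup.zpowers g := Subgroup.one_mem _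
  rintro x hx y hy hxy ⟨-, z, hxz, hyz⟩
  have hz : z ∉ Subgroup.zpowers g := fun hz => hx (Subgroup.zpowers_le.mpr hz hxz)
  obtain rfl | rfl := eq_one_or_eq_of_mem_zpowers_of_sq_eq_one (h z hz) hxz
  · exact hx h1
  obtain rfl | rfl := eq_one_or_eq_of_mem_zpowers_of_sq_eq_one (h _ hz) hyz
  · exact hy h1
  · exact hxy rfl

end EnhancedPowerGraph

theorem DihedralGroup.sq_eq_one_of_notMem_zpowers_r_one {n : ℕ} {x : DihedralGroup n}
    (hx : x ∉ Subgroup.zpowers (r 1)) : x ^ 2 = 1 := by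
  cases x with
  | r i => exact absurd ⟨(i.cast : ℤ), by simp⟩ hx
  | sr i => rw [sq, sr_mul_self]

/-- For every `n ≥ 3`, the enhanced power graph of the dihedral group
`D_{2n}` of order `2n` is a perfect graph. -/
theorem stmt_16 (n : ℕ) (hn : 3 ≤ n) :
    IsPerfect (enhancedPowerGraph (DihedralGroup n)) := by
  have : NeZero n := ⟨by omega⟩
  exact isPerfect_of_isClique_of_isIndepSet_compl
    (enhancedPowerGraph_isClique_zpowers (DihedralGroup.r 1))
    (enhancedPowerGraph_isIndepSet_compl_zpowers
      fun _ => DihedralGroup.sq_eq_one_of_notMem_zpowers_r_one)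
end

section
/- For the enhanced power graph of the dihedral group D_{2n} = ⟨a, b : a^n = b^2 = e, ab = ba^{-1}⟩ of order 2n (n ≥ 3): (i) the minimum degree is 1; (ii) the independence number is n + 1; (iii) the matching number is ⌈n/2⌉; (iv) the strong metric dimension is 2(n − 1). -/
/-!
In the enhanced power graph of `D_{2n}` the identity is adjacent to every vertex, the rotations
form a clique (they all lie in `⟨r 1⟩`), and a reflection lies only in the cyclic subgroup
`{1, sr i}` it generates, so it is a pendant vertex attached to `1`. Hence a reflection has
degree `1`; an independent set holds at most one rotation besides reflections; a matching covers
at most one reflection, since all their edges pass through `1`, and hence at most `n + 1` vertices.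
Finally every induced path of length two has middle vertex `1`, so two vertices other than `1` are
strongly resolved only by themselves: a strong resolving set omits at most `1` and one other vertex.
-/

section Graph

variable {V : Type*} {g : SimpleGraph V}

lemma IsIndepSet'.subsingleton_inter {s t : Set V} (hs : IsIndepSet' g s) (ht : g.IsClique t) :
    (s ∩ t).Subsingleton := by
  rintro a ⟨has, hat⟩ b ⟨hbs, hbt⟩
  by_contra hab
  exact hs has hbs hab (ht hat hbt hab)

lemma IsMatching'.ncard_biUnion [Finite V] {M : Set (Sym2 V)} (hM : IsMatching' g M) :
    (⋃ e ∈ M, (e : Set V)).ncard = 2 * M.ncard := by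
  classical
  have hfin : M.Finite := Set.toFinite M
  have hunion : (⋃ e ∈ M, (e : Set V)) = ↑(hfin.toFinset.biUnion Sym2.toFinset) := by
    ext v
    simp
  have hdisj : (hfin.toFinset : Set (Sym2 V)).PairwiseDisjoint Sym2.toFinset := by
    intro e he f hf hef
    simp only [Set.Finite.coe_toFinset] at he hf
    exact Finset.disjoint_left.mpr fun v hve hvf =>
      hM.2 he hf hef v (Sym2.mem_toFinset.mp hve) (Sym2.mem_toFinset.mp hvf)
  have hcard : ∀ e ∈ hfin.toFinset, e.toFinset.card = 2 := fun e he =>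
    Sym2.card_toFinset_of_not_isDiag e
      (g.not_isDiag_of_mem_edgeSet (hM.1 (hfin.mem_toFinset.mp he)))
  rw [hunion, Set.ncard_coe_finset, Finset.card_biUnion hdisj, Finset.sum_congr rfl hcard,
    Set.ncard_eq_toFinset_card M hfin, Finset.sum_const, smul_eq_mul, mul_comm]

lemma IsMatching'.subsingleton_biUnion_inter {M : Set (Sym2 V)} (hM : IsMatching' g M)
    {P : Set V} {c : V} (hP : ∀ p ∈ P, ∀ w, g.Adj p w → w = c) :
    ((⋃ e ∈ M, (e : Set V)) ∩ P).Subsingleton := by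
  have hedge : ∀ p ∈ P, ∀ e ∈ M, p ∈ e → e = s(p, c) ∧ g.Adj p c := by
    intro p hp e he hpe
    obtain ⟨w, rfl⟩ := Sym2.mem_iff_exists.mp hpe
    have hw : g.Adj p w := hM.1 he
    obtain rfl := hP p hp w hw
    exact ⟨rfl, hw⟩
  rintro p ⟨hpM, hpP⟩ q ⟨hqM, hqP⟩
  simp only [Set.mem_iUnion, SetLike.mem_coe, exists_prop] at hpM hqM
  obtain ⟨e, he, hpe⟩ := hpM
  obtain ⟨f, hf, hqf⟩ := hqM
  obtain ⟨rfl, hpc⟩ := hedge p hpP e he hpe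
  obtain ⟨rfl, hqc⟩ := hedge q hqP f hf hqf
  have hef : s(p, c) = s(q, c) := by
    by_contra hne
    exact hM.2 he hf hne c (Sym2.mem_mk_right p c) (Sym2.mem_mk_right q c)
  rcases Sym2.eq_iff.mp hef with ⟨hpq, -⟩ | ⟨rfl, -⟩
  · exact hpq
  · exact absurd hpc (g.loopless.irrefl p)

lemma SimpleGraph.Subgraph.IsMatching.isMatching'_edgeSet {M : g.Subgraph} (hM : M.IsMatching) :
    IsMatching' g M.edgeSet := by
  refine ⟨M.edgeSet_subset, ?_⟩
  rintro e he f hf hne v hve hvf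
  obtain ⟨w, rfl⟩ := Sym2.mem_iff_exists.mp hve
  obtain ⟨w', rfl⟩ := Sym2.mem_iff_exists.mp hvf
  obtain rfl : w = w' := hM.eq_of_adj_left (M.mem_edgeSet.mp he) (M.mem_edgeSet.mp hf)
  exact hne rfl

lemma SimpleGraph.Subgraph.IsMatching.ncard_verts [Finite V] {M : g.Subgraph}
    (hM : M.IsMatching) : M.verts.ncard = 2 * M.edgeSet.ncard := by
  rw [hM.verts_eq_biUnion_edgeSet, hM.isMatching'_edgeSet.ncard_biUnion]

lemma exists_walk_length_le_two_of_forall_adj {m : V} (hm : ∀ x, x ≠ m → g.Adj m x)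
    (x y : V) : ∃ p : g.Walk x y, p.length ≤ 2 := by
  have hto : ∀ z, ∃ p : g.Walk z m, p.length ≤ 1 := fun z => by
    rcases eq_or_ne z m with rfl | hz
    · exact ⟨.nil, by simp⟩
    · exact ⟨(hm z hz).symm.toWalk, by simp⟩
  obtain ⟨p, hp⟩ := hto x
  obtain ⟨q, hq⟩ := hto y
  exact ⟨p.append q.reverse, by simp; omega⟩

lemma dist_eq_two_of_forall_adj {m : V} (hm : ∀ x, x ≠ m → g.Adj m x) {x y : V}
    (hxy : x ≠ y) (h : ¬ g.Adj x y) : g.dist x y = 2 := by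
  obtain ⟨p, hp⟩ := exists_walk_length_le_two_of_forall_adj hm x y
  have hpos := p.reachable.pos_dist_of_ne hxy
  have hne : g.dist x y ≠ 1 := fun h1 => h (SimpleGraph.dist_eq_one_iff_adj.mp h1)
  have hle := SimpleGraph.dist_le p
  omega

lemma adj_of_dist_eq_add_of_forall_adj {m : V} (hm : ∀ x, x ≠ m → g.Adj m x) {z u v : V}
    (hzv : z ≠ v) (hvu : v ≠ u) (h : g.dist z u = g.dist z v + g.dist v u) :
    g.Adj z v ∧ g.Adj v u ∧ z ≠ u ∧ ¬ g.Adj z u := by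
  obtain ⟨p, hp⟩ := exists_walk_length_le_two_of_forall_adj hm z u
  obtain ⟨q, -⟩ := exists_walk_length_le_two_of_forall_adj hm z v
  obtain ⟨w, -⟩ := exists_walk_length_le_two_of_forall_adj hm v u
  have hzv' := q.reachable.pos_dist_of_ne hzv
  have hvu' := w.reachable.pos_dist_of_ne hvu
  have hzu := SimpleGraph.dist_le p
  have h1 : g.dist z v = 1 ∧ g.dist v u = 1 := by omega
  refine ⟨SimpleGraph.dist_eq_one_iff_adj.mp h1.1, SimpleGraph.dist_eq_one_iff_adj.mp h1.2,
    ?_, ?_⟩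
  · rintro rfl
    simp at h
    omega
  · intro hadj
    rw [SimpleGraph.dist_eq_one_iff_adj.mpr hadj] at h
    omega

/- These name the notions that `sdim` spells out inline: `sdim g` unfolds to the infimum of the
cardinalities of strong resolving sets. -/
def StronglyResolves (g : SimpleGraph V) (z u v : V) : Prop :=
  g.dist z u = g.dist z v + g.dist v u ∨ g.dist z v = g.dist z u + g.dist u v

def IsStrongResolvingSet (g : SimpleGraph V) (U : Set V) : Prop :=
  ∀ u v, u ≠ v → ∃ z ∈ U, StronglyResolves g z u v

lemma stronglyResolves_self (g : SimpleGraph V) (u v : V) : StronglyResolves g u u v :=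
  Or.inr (by simp)

lemma StronglyResolves.symm {z u v : V} (h : StronglyResolves g z u v) :
    StronglyResolves g z v u :=
  Or.symm h

lemma StronglyResolves.eq_or_eq_of_forall_adj {m : V} (hm : ∀ x, x ≠ m → g.Adj m x)
    (hmid : ∀ a b c, g.Adj a b → g.Adj b c → a ≠ c → ¬ g.Adj a c → b = m)
    {z u v : V} (hu : u ≠ m) (hv : v ≠ m) (huv : u ≠ v) (h : StronglyResolves g z u v) :
    z = u ∨ z = v := by
  by_contra! hz
  rcases h with h | h
  · obtain ⟨hzv, hvu, hzu, hnzu⟩ := adj_of_dist_eq_add_of_forall_adj hm hz.2 huv.symm h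
    exact hv (hmid z v u hzv hvu hzu hnzu)
  · obtain ⟨hzu, huv, hzv, hnzv⟩ := adj_of_dist_eq_add_of_forall_adj hm hz.1 huv h
    exact hu (hmid z u v hzu huv hzv hnzv)

lemma IsStrongResolvingSet.ncard_compl_le_two [Finite V] {m : V}
    (hm : ∀ x, x ≠ m → g.Adj m x)
    (hmid : ∀ a b c, g.Adj a b → g.Adj b c → a ≠ c → ¬ g.Adj a c → b = m)
    {U : Set V} (hU : IsStrongResolvingSet g U) : Uᶜ.ncard ≤ 2 := by
  have hsub : (Uᶜ \ {m}).Subsingleton := by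
    rintro u ⟨huU, hu⟩ v ⟨hvU, hv⟩
    by_contra huv
    obtain ⟨z, hzU, hz⟩ := hU u v huv
    rcases hz.eq_or_eq_of_forall_adj hm hmid hu hv huv with rfl | rfl
    exacts [huU hzU, hvU hzU]
  calc Uᶜ.ncard ≤ (insert m (Uᶜ \ {m})).ncard := Set.ncard_le_ncard (by simp)
    _ ≤ (Uᶜ \ {m}).ncard + 1 := Set.ncard_insert_le _ _
    _ ≤ 2 := by have := Set.ncard_le_one_iff_subsingleton.mpr hsub; omega

end Graph

section Group

variable {G : Type*} [Group G]

lemma enhancedPowerGraph_one_adj {x : G} (hx : x ≠ 1) : (enhancedPowerGraph G).Adj 1 x :=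
  ⟨hx.symm, x, one_mem _, Subgroup.mem_zpowers x⟩

lemma enhancedPowerGraph_ncard_neighborSet_pos [Finite G] [Nontrivial G] (x : G) :
    0 < ((enhancedPowerGraph G).neighborSet x).ncard := by
  rw [Set.ncard_pos]
  rcases eq_or_ne x 1 with rfl | hx
  · obtain ⟨y, hy⟩ := exists_ne (1 : G)
    exact ⟨y, enhancedPowerGraph_one_adj hy⟩
  · exact ⟨1, (enhancedPowerGraph_one_adj hx).symm⟩

end Group

namespace DihedralGroup

variable {n : ℕ}

local notation "Γ" => enhancedPowerGraph (DihedralGroup n)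

lemma sr_ne_one (i : ZMod n) : sr i ≠ (1 : DihedralGroup n) := by
  rw [one_def]
  exact fun h => nomatch h

lemma r_one_ne_one (hn : 2 ≤ n) : r 1 ≠ (1 : DihedralGroup n) := by
  have : Fact (1 < n) := ⟨hn⟩
  rw [one_def, Ne, r.injEq]
  exact one_ne_zero

lemma mem_range_r_or_mem_range_sr (x : DihedralGroup n) :
    x ∈ Set.range r ∨ x ∈ Set.range sr := by
  cases x with
  | r i => exact Or.inl ⟨i, rfl⟩
  | sr i => exact Or.inr ⟨i, rfl⟩

lemma ncard_range_r [NeZero n] : (Set.range (r : ZMod n → DihedralGroup n)).ncard = n := by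
  rw [Set.ncard_range_of_injective fun _ _ h => r.inj h, Nat.card_zmod]

lemma ncard_range_sr [NeZero n] : (Set.range (sr : ZMod n → DihedralGroup n)).ncard = n := by
  rw [Set.ncard_range_of_injective fun _ _ h => sr.inj h, Nat.card_zmod]

lemma exists_r_of_mem_zpowers_r {k : ZMod n} {x : DihedralGroup n}
    (hx : x ∈ Subgroup.zpowers (r k)) : ∃ i, x = r i := by
  obtain ⟨m, rfl⟩ := hx
  exact ⟨_, r_zpow k m⟩

lemma eq_one_or_eq_of_mem_zpowers_sr {i : ZMod n} {x : DihedralGroup n}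
    (hx : x ∈ Subgroup.zpowers (sr i)) : x = 1 ∨ x = sr i := by
  obtain ⟨m, rfl⟩ := Subgroup.mem_zpowers_iff.mp hx
  rw [← zpow_mod_orderOf, orderOf_sr]
  rcases Int.emod_two_eq m with h | h <;> simp [h]

lemma r_mem_zpowers_r_one [NeZero n] (i : ZMod n) :
    r i ∈ Subgroup.zpowers (r 1 : DihedralGroup n) :=
  ⟨i.val, by simp⟩

lemma enhancedPowerGraph_adj_r_r [NeZero n] {i j : ZMod n} (h : i ≠ j) : (Γ).Adj (r i) (r j) :=
  ⟨by simpa using h, r 1, r_mem_zpowers_r_one i, r_mem_zpowers_r_one j⟩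

lemma isClique_range_r [NeZero n] : (Γ).IsClique (Set.range r) := by
  rintro _ ⟨i, rfl⟩ _ ⟨j, rfl⟩ hij
  exact enhancedPowerGraph_adj_r_r fun h => hij (h ▸ rfl)

lemma enhancedPowerGraph_adj_sr_iff {i : ZMod n} {y : DihedralGroup n} :
    (Γ).Adj (sr i) y ↔ y = 1 := by
  constructor
  · rintro ⟨hne, z, hx, hy⟩
    cases z with
    | r k =>
      obtain ⟨j, hj⟩ := exists_r_of_mem_zpowers_r hx
      cases hj
    | sr k =>
      rcases eq_one_or_eq_of_mem_zpowers_sr hx with h | h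
      · exact absurd h (sr_ne_one i)
      · rw [← h] at hy
        exact (eq_one_or_eq_of_mem_zpowers_sr hy).resolve_right hne.symm
  · rintro rfl
    exact (enhancedPowerGraph_one_adj (sr_ne_one i)).symm

lemma exists_r_of_enhancedPowerGraph_adj {x y : DihedralGroup n} (h : (Γ).Adj x y)
    (hx : x ≠ 1) : ∃ j, y = r j := by
  cases y with
  | r j => exact ⟨j, rfl⟩
  | sr j => exact absurd (enhancedPowerGraph_adj_sr_iff.mp h.symm) hx

lemma eq_one_of_enhancedPowerGraph_adj_adj [NeZero n] {a b c : DihedralGroup n}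
    (hab : (Γ).Adj a b) (hbc : (Γ).Adj b c) (hac : a ≠ c) (hnac : ¬ (Γ).Adj a c) : b = 1 := by
  by_contra hb
  obtain ⟨i, rfl⟩ := exists_r_of_enhancedPowerGraph_adj hab.symm hb
  obtain ⟨j, rfl⟩ := exists_r_of_enhancedPowerGraph_adj hbc hb
  exact hnac (enhancedPowerGraph_adj_r_r fun h => hac (h ▸ rfl))

lemma isLeast_ncard_neighborSet [NeZero n] :
    IsLeast {k | ∃ v : DihedralGroup n, ((Γ).neighborSet v).ncard = k} 1 := by
  refine ⟨⟨sr 0, ?_⟩, ?_⟩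
  · have : (Γ).neighborSet (sr 0) = {1} := Set.ext fun _ => enhancedPowerGraph_adj_sr_iff
    rw [this, Set.ncard_singleton]
  · rintro _ ⟨v, rfl⟩
    exact enhancedPowerGraph_ncard_neighborSet_pos v

lemma isIndepSet'_insert_r_one_range_sr (hn : 2 ≤ n) :
    IsIndepSet' Γ (insert (r 1) (Set.range sr)) := by
  have hne : ∀ x ∈ insert (r 1) (Set.range sr), x ≠ (1 : DihedralGroup n) := by
    rintro _ (rfl | ⟨a, rfl⟩)
    exacts [r_one_ne_one hn, sr_ne_one a]
  rintro x hx y hy hxy hadj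
  rcases hx with rfl | ⟨a, rfl⟩
  · rcases hy with rfl | ⟨b, rfl⟩
    · exact hxy rfl
    · exact hne _ (Set.mem_insert (r 1) _) (enhancedPowerGraph_adj_sr_iff.mp hadj.symm)
  · exact hne y hy (enhancedPowerGraph_adj_sr_iff.mp hadj)

lemma ncard_le_of_isIndepSet' [NeZero n] {s : Set (DihedralGroup n)} (hs : IsIndepSet' Γ s) :
    s.ncard ≤ n + 1 := by
  have hsub : s ⊆ (s ∩ Set.range r) ∪ Set.range sr := fun x hx =>
    (mem_range_r_or_mem_range_sr x).imp (⟨hx, ·⟩) id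
  have hr := Set.ncard_le_one_iff_subsingleton.mpr (hs.subsingleton_inter isClique_range_r)
  calc s.ncard ≤ ((s ∩ Set.range r) ∪ Set.range sr).ncard := Set.ncard_le_ncard hsub
    _ ≤ (s ∩ Set.range r).ncard + (Set.range sr).ncard := Set.ncard_union_le _ _
    _ ≤ n + 1 := by rw [ncard_range_sr]; omega

lemma isGreatest_ncard_isIndepSet' [NeZero n] (hn : 2 ≤ n) :
    IsGreatest {k | ∃ s : Set (DihedralGroup n), IsIndepSet' Γ s ∧ s.ncard = k} (n + 1) := by
  refine ⟨⟨_, isIndepSet'_insert_r_one_range_sr hn, ?_⟩, ?_⟩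
  · rw [Set.ncard_insert_of_notMem (by simp), ncard_range_sr]
  · rintro _ ⟨s, hs, rfl⟩
    exact ncard_le_of_isIndepSet' hs

lemma ncard_le_of_isMatching' [NeZero n] {M : Set (Sym2 (DihedralGroup n))}
    (hM : IsMatching' Γ M) : M.ncard ≤ (n + 1) / 2 := by
  set W := ⋃ e ∈ M, (e : Set (DihedralGroup n))
  have hsr : (W ∩ Set.range sr).Subsingleton := hM.subsingleton_biUnion_inter (c := 1) <| by
    rintro _ ⟨i, rfl⟩ w hw
    exact enhancedPowerGraph_adj_sr_iff.mp hw
  have hsub : W ⊆ Set.range r ∪ (W ∩ Set.range sr) := fun x hx =>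
    (mem_range_r_or_mem_range_sr x).imp id (⟨hx, ·⟩)
  have hW : W.ncard ≤ n + 1 :=
    calc W.ncard ≤ (Set.range r ∪ (W ∩ Set.range sr)).ncard := Set.ncard_le_ncard hsub
      _ ≤ (Set.range r).ncard + (W ∩ Set.range sr).ncard := Set.ncard_union_le _ _
      _ ≤ n + 1 := by
        rw [ncard_range_r]
        have := Set.ncard_le_one_iff_subsingleton.mpr hsr
        omega
  have hcount : W.ncard = 2 * M.ncard := hM.ncard_biUnion
  omega

lemma exists_isMatching'_ncard_eq [NeZero n] (hn : 2 ≤ n) :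
    ∃ M : Set (Sym2 (DihedralGroup n)), IsMatching' Γ M ∧ M.ncard = (n + 1) / 2 := by
  -- The edge `{1, sr 0}` plus a perfect matching of `2 * ((n - 1) / 2)` nontrivial rotations,
  -- which exists because the rotations form a clique.
  set m := (n - 1) / 2
  have hR : (Set.range r \ {1} : Set (DihedralGroup n)).ncard = n - 1 := by
    rw [Set.ncard_sdiff_singleton_of_mem (Set.mem_range.mpr ⟨0, r_zero⟩), ncard_range_r]
  obtain ⟨t, hts, ht⟩ := Set.exists_subset_card_eq (s := Set.range r \ {1}) (n := 2 * m)
    (by omega)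
  obtain ⟨M₁, hM₁verts, hM₁⟩ :=
    ((isClique_range_r.subset (hts.trans Set.sdiff_subset)).even_iff_exists_isMatching
      (Set.toFinite t)).mp (by rw [ht]; exact even_two_mul m)
  set M₀ := (Γ).subgraphOfAdj (enhancedPowerGraph_one_adj (sr_ne_one (0 : ZMod n)))
  have hdisj : Disjoint M₀.verts M₁.verts := by
    rw [hM₁verts, SimpleGraph.subgraphOfAdj_verts, Set.disjoint_insert_left,
      Set.disjoint_singleton_left]
    exact ⟨fun h => (hts h).2 rfl, fun h => by obtain ⟨i, hi⟩ := (hts h).1; cases hi⟩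
  have hM : (M₀ ⊔ M₁).IsMatching := by
    refine (SimpleGraph.Subgraph.IsMatching.subgraphOfAdj _).sup hM₁ ?_
    rwa [(SimpleGraph.Subgraph.IsMatching.subgraphOfAdj _).support_eq_verts,
      hM₁.support_eq_verts]
  refine ⟨_, hM.isMatching'_edgeSet, ?_⟩
  have hverts := hM.ncard_verts
  rw [SimpleGraph.Subgraph.verts_sup, Set.ncard_union_eq hdisj, hM₁verts, ht,
    SimpleGraph.subgraphOfAdj_verts, Set.ncard_pair (sr_ne_one 0).symm] at hverts
  omega

lemma isGreatest_ncard_isMatching' [NeZero n] (hn : 2 ≤ n) :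
    IsGreatest {k | ∃ M : Set (Sym2 (DihedralGroup n)), IsMatching' Γ M ∧ M.ncard = k}
      ((n + 1) / 2) :=
  ⟨exists_isMatching'_ncard_eq hn, by
    rintro _ ⟨M, hM, rfl⟩
    exact ncard_le_of_isMatching' hM⟩

lemma isStrongResolvingSet_compl_one_sr_zero (hn : 2 ≤ n) :
    IsStrongResolvingSet Γ {1, sr 0}ᶜ := by
  intro u v huv
  by_cases hu : u ∈ ({1, sr 0}ᶜ : Set (DihedralGroup n))
  · exact ⟨u, hu, stronglyResolves_self _ u v⟩
  by_cases hv : v ∈ ({1, sr 0}ᶜ : Set (DihedralGroup n))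
  · exact ⟨v, hv, (stronglyResolves_self _ v u).symm⟩
  have hr1 : r 1 ∈ ({1, sr 0}ᶜ : Set (DihedralGroup n)) := by
    simp [r_one_ne_one hn]
  have hres : StronglyResolves Γ (r 1) 1 (sr 0) := by
    have h1 : (Γ).dist (r 1) 1 = 1 :=
      SimpleGraph.dist_eq_one_iff_adj.mpr (enhancedPowerGraph_one_adj (r_one_ne_one hn)).symm
    have h2 : (Γ).dist 1 (sr 0) = 1 :=
      SimpleGraph.dist_eq_one_iff_adj.mpr (enhancedPowerGraph_one_adj (sr_ne_one 0))
    have h3 : (Γ).dist (r 1) (sr 0) = 2 :=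
      dist_eq_two_of_forall_adj (fun _ => enhancedPowerGraph_one_adj) (by simp) fun h =>
        r_one_ne_one hn (enhancedPowerGraph_adj_sr_iff.mp h.symm)
    exact Or.inr (by rw [h1, h2, h3])
  simp only [Set.mem_compl_iff, Set.mem_insert_iff, Set.mem_singleton_iff, not_not] at hu hv
  rcases hu with rfl | rfl <;> rcases hv with rfl | rfl
  exacts [absurd rfl huv, ⟨r 1, hr1, hres⟩, ⟨r 1, hr1, hres.symm⟩, absurd rfl huv]

lemma isLeast_ncard_isStrongResolvingSet [NeZero n] (hn : 2 ≤ n) :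
    IsLeast {k | ∃ U : Set (DihedralGroup n), IsStrongResolvingSet Γ U ∧ U.ncard = k}
      (2 * (n - 1)) := by
  refine ⟨⟨_, isStrongResolvingSet_compl_one_sr_zero hn, ?_⟩, ?_⟩
  · have := Set.ncard_add_ncard_compl ({1, sr 0} : Set (DihedralGroup n))
    rw [Set.ncard_pair (sr_ne_one 0).symm, nat_card] at this
    omega
  · rintro _ ⟨U, hU, rfl⟩
    have hcompl := hU.ncard_compl_le_two (fun _ => enhancedPowerGraph_one_adj)
      fun _ _ _ => eq_one_of_enhancedPowerGraph_adj_adj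
    have := Set.ncard_add_ncard_compl U
    rw [nat_card] at this
    omega

end DihedralGroup

open DihedralGroup in
/-- For the enhanced power graph of the dihedral group `D_{2n}` (`n ≥ 3`):
(i) the minimum degree is `1`; (ii) the independence number is `n + 1`;
(iii) the matching number is `⌈n/2⌉`; (iv) the strong metric dimension is `2(n − 1)`. -/
theorem stmt_17 (n : ℕ) (hn : 3 ≤ n) [NeZero n] :
    minDeg (enhancedPowerGraph (DihedralGroup n)) = 1 ∧
    indepNum (enhancedPowerGraph (DihedralGroup n)) = n + 1 ∧
    matchingNum (enhancedPowerGraph (DihedralGroup n)) = (n + 1) / 2 ∧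
    sdim (enhancedPowerGraph (DihedralGroup n)) = 2 * (n - 1) := by
  have hn2 : 2 ≤ n := by omega
  exact ⟨isLeast_ncard_neighborSet.csInf_eq,
    (isGreatest_ncard_isIndepSet' hn2).csSup_eq,
    (isGreatest_ncard_isMatching' hn2).csSup_eq,
    (isLeast_ncard_isStrongResolvingSet hn2).csInf_eq⟩
end

section
/- For every n ≥ 2, the enhanced power graph of the semidihedral group SD_{8n} = ⟨a, b : a^{4n} = b^2 = e, ba = a^{2n−1}b⟩ of order 8n is a perfect graph. -/
/-! Outside the cyclic subgroup `N = ⟨a⟩` every element `x` has `x² ∈ ⟨t⟩` with `t = a^{2n}`,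
`t² = 1`, so `⟨x⟩` is `{1, x}` or `{1, t, x, x⁻¹}` and meets `N` only inside `⟨t⟩`. Number the
elements of `G` with `1` first and `t` second, and put `u ≤ v` when `u` comes no later than `v` and
lies in `N` (if `v ∈ N`) or in `⟨v⟩` (if `v ∉ N`). This is a partial order whose principal
down-sets are cliques and whose comparability graph is the enhanced power graph. Such a graph is
perfect: in any induced subgraph, colouring a vertex by the size of its down-set uses exactly as
many colours as the largest down-set, which is a clique. -/

open SimpleGraph Subgroup

section Perfect

variable {V : Type*} [Finite V] {g : SimpleGraph V}

theorem chromaticNumber_eq_cliqueNum_of_isNClique_of_colorable {k : ℕ} {t : Finset V}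
    (ht : g.IsNClique k t) (hk : g.Colorable k) : g.chromaticNumber = g.cliqueNum :=
  le_antisymm
    (hk.chromaticNumber_le.trans <| by exact_mod_cast ht.card_eq ▸ ht.isClique.card_le_cliqueNum)
    g.cliqueNum_le_chromaticNumber

variable [PartialOrder V]

theorem exists_isNClique_colorable_of_isClique_Iic (hchain : ∀ v, g.IsClique (Set.Iic v))
    (hcomp : ∀ ⦃u v⦄, g.Adj u v → u ≤ v ∨ v ≤ u) :
    ∃ (k : ℕ) (t : Finset V), g.IsNClique k t ∧ g.Colorable k := by
  cases isEmpty_or_nonempty V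
  · exact ⟨0, ∅, isNClique_empty.mpr rfl, .of_isEmpty 0⟩
  set height : V → ℕ := fun v => (Set.Iic v).ncard
  have height_pos (v : V) : 0 < height v := (Set.ncard_pos).mpr Set.nonempty_Iic
  have height_strictMono : StrictMono height := fun u v huv =>
    Set.ncard_lt_ncard (Set.Iic_ssubset_Iic.mpr huv)
  obtain ⟨v₀, hv₀⟩ := Finite.exists_max height
  refine ⟨height v₀, (Set.toFinite (Set.Iic v₀)).toFinset, ⟨?_, ?_⟩, ?_⟩
  · simpa using hchain v₀
  · exact (Set.ncard_eq_toFinset_card _ _).symm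
  · refine (colorable_iff_exists_bdd_nat_coloring _).mpr
      ⟨Coloring.mk (fun v => height v - 1) fun {u v} huv heq => ?_, fun v => ?_⟩
    · have := height_pos u; have := height_pos v
      rcases hcomp huv with h | h
      · have := height_strictMono (h.lt_of_ne huv.ne); omega
      · have := height_strictMono (h.lt_of_ne huv.ne.symm); omega
    · have := height_pos v; have := hv₀ v
      show height v - 1 < height v₀
      omega

theorem isPerfect_of_isClique_Iic (hchain : ∀ v, g.IsClique (Set.Iic v))
    (hcomp : ∀ ⦃u v⦄, g.Adj u v → u ≤ v ∨ v ≤ u) : IsPerfect g := by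
  intro s
  obtain ⟨k, t, ht, hk⟩ := exists_isNClique_colorable_of_isClique_Iic (g := g.induce s)
    (fun v x hx y hy hxy => hchain v hx hy (Subtype.coe_injective.ne hxy)) fun u v huv => hcomp huv
  -- `cliqueNum'` unfolds to Mathlib's `cliqueNum`.
  exact chromaticNumber_eq_cliqueNum_of_isNClique_of_colorable ht hk

end Perfect

section Group

variable {G : Type*} [Group G]

theorem eq_one_or_eq_of_mem_zpowers_of_sq_eq_one_s18 {t x : G} (ht : t ^ 2 = 1)
    (hx : x ∈ zpowers t) : x = 1 ∨ x = t := by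
  obtain ⟨k, rfl⟩ := mem_zpowers_iff.mp hx
  obtain ⟨m, rfl | rfl⟩ := Int.even_or_odd' k
  · left; rw [zpow_mul, zpow_ofNat, ht, one_zpow]
  · right; rw [zpow_add_one, zpow_mul, zpow_ofNat, ht, one_zpow, one_mul]

theorem mem_zpowers_zpow_of_pow_four_eq_one {z : G} (hz : z ^ 4 = 1) {k : ℤ} (hk : Odd k) :
    z ∈ zpowers (z ^ k) := by
  obtain ⟨m, rfl⟩ := hk
  refine mem_zpowers_iff.mpr ⟨2 * m + 1, ?_⟩
  rw [← zpow_mul, show (2 * m + 1) * (2 * m + 1) = 4 * (m * m + m) + 1 by ring, zpow_add_one,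
    zpow_mul, zpow_ofNat, hz, one_zpow, one_mul]

section SquaresInSubgroup

variable {N : Subgroup G} {t y z : G}

theorem zpow_mem_iff_even_s18 (hz : z ∉ N) (hz2 : z ^ 2 ∈ N) (k : ℤ) : z ^ k ∈ N ↔ Even k := by
  obtain ⟨m, rfl | rfl⟩ := Int.even_or_odd' k
  · simpa [zpow_mul] using zpow_mem hz2 m
  · refine iff_of_false (fun h => hz ?_) (Int.not_even_iff_odd.mpr (odd_two_mul_add_one m))
    rw [zpow_add_one, zpow_mul, zpow_ofNat] at h
    simpa using N.mul_mem (N.inv_mem (zpow_mem hz2 m)) h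

theorem mem_zpowers_of_mem_zpowers_of_mem (htN : t ∈ N) (hsq : ∀ x ∉ N, x ^ 2 ∈ zpowers t)
    (hz : z ∉ N) (hy : y ∈ zpowers z) (hyN : y ∈ N) : y ∈ zpowers t := by
  obtain ⟨k, rfl⟩ := mem_zpowers_iff.mp hy
  obtain ⟨m, rfl⟩ := (zpow_mem_iff_even_s18 hz (zpowers_le.mpr htN (hsq z hz)) k).mp hyN
  rw [← two_mul, zpow_mul, zpow_ofNat]
  exact zpow_mem (hsq z hz) m

theorem mem_zpowers_of_mem_zpowers_of_not_mem (ht : t ^ 2 = 1) (htN : t ∈ N)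
    (hsq : ∀ x ∉ N, x ^ 2 ∈ zpowers t) (hy : y ∈ zpowers z) (hyN : y ∉ N) : z ∈ zpowers y := by
  obtain ⟨k, rfl⟩ := mem_zpowers_iff.mp hy
  have hz : z ∉ N := fun h => hyN (zpow_mem h k)
  have hz4 : z ^ 4 = 1 := by
    rw [show 4 = 2 * 2 by rfl, pow_mul]
    rcases eq_one_or_eq_of_mem_zpowers_of_sq_eq_one_s18 ht (hsq z hz) with h | h <;> simp [h, ht]
  refine mem_zpowers_zpow_of_pow_four_eq_one hz4 (Int.not_even_iff_odd.mp fun hk => hyN ?_)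
  exact (zpow_mem_iff_even_s18 hz (zpowers_le.mpr htN (hsq z hz)) k).mpr hk

end SquaresInSubgroup

theorem exists_injective_forall_le_mem_zpowers [Countable G] {t : G} (ht : t ^ 2 = 1) :
    ∃ key : G → ℕ, Function.Injective key ∧
      ∀ u v, v ∈ zpowers t → key u ≤ key v → u ∈ zpowers v := by
  classical
  obtain ⟨e, he⟩ := Countable.exists_injective_nat G
  refine ⟨fun v => if v = 1 then 0 else if v = t then 1 else e v + 2, fun u v huv => ?_, ?_⟩
  · dsimp only at huv
    split_ifs at huv <;> first | omega | (subst_vars; rfl) | exact he (by omega)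
  · intro u v hv huv
    rcases eq_one_or_eq_of_mem_zpowers_of_sq_eq_one_s18 ht hv with rfl | rfl
    · dsimp only at huv; split_ifs at huv <;> simp_all
    · dsimp only at huv; split_ifs at huv <;> simp_all [mem_zpowers]

open Classical in
theorem mem_zpowers_ite_of_adj_of_le {a t : G} (ht : t ^ 2 = 1) (htN : t ∈ zpowers a)
    (hsq : ∀ x ∉ zpowers a, x ^ 2 ∈ zpowers t) {key : G → ℕ}
    (hkey_le : ∀ u v, v ∈ zpowers t → key u ≤ key v → u ∈ zpowers v) {u v : G}
    (huv : (enhancedPowerGraph G).Adj u v) (hkey : key u ≤ key v) :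
    u ∈ zpowers (if v ∈ zpowers a then a else v) := by
  obtain ⟨-, z, hu, hv⟩ := huv
  split_ifs with hvN
  · by_contra huN
    have hz : z ∉ zpowers a := fun h => huN (zpowers_le.mpr h hu)
    have hvt := mem_zpowers_of_mem_zpowers_of_mem htN hsq hz hv hvN
    exact huN (zpowers_le.mpr htN (zpowers_le.mpr hvt (hkey_le u v hvt hkey)))
  · exact zpowers_le.mpr (mem_zpowers_of_mem_zpowers_of_not_mem ht htN hsq hv hvN) hu

theorem isPerfect_enhancedPowerGraph_of_sq_mem_zpowers [Finite G] {a t : G} (ht : t ^ 2 = 1)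
    (htN : t ∈ zpowers a) (hsq : ∀ x ∉ zpowers a, x ^ 2 ∈ zpowers t) :
    IsPerfect (enhancedPowerGraph G) := by
  classical
  obtain ⟨key, hkey, hkey_le⟩ := exists_injective_forall_le_mem_zpowers ht
  let gen : G → G := fun v => if v ∈ zpowers a then a else v
  have gen_of_mem {v} (hv : v ∈ zpowers a) : gen v = a := if_pos hv
  have gen_of_not_mem {v} (hv : v ∉ zpowers a) : gen v = v := if_neg hv
  let _ : PartialOrder G :=
    { le u v := key u ≤ key v ∧ u ∈ zpowers (gen v)
      le_refl v := ⟨le_rfl, by by_cases hv : v ∈ zpowers a <;> simp [gen, hv]⟩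
      le_trans u v w huv hvw := by
        refine ⟨huv.1.trans hvw.1, ?_⟩
        by_cases hw : w ∈ zpowers a
        · have hv : v ∈ zpowers a := gen_of_mem hw ▸ hvw.2
          simpa [gen_of_mem hv, gen_of_mem hw] using huv.2
        rw [gen_of_not_mem hw] at hvw ⊢
        by_cases hv : v ∈ zpowers a
        · have hvt := mem_zpowers_of_mem_zpowers_of_mem htN hsq hw hvw.2 hv
          exact zpowers_le.mpr hvw.2 (hkey_le u v hvt huv.1)
        · exact zpowers_le.mpr hvw.2 (gen_of_not_mem hv ▸ huv.2)
      le_antisymm u v huv hvu := hkey (le_antisymm huv.1 hvu.1) }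
  have le_iff {u v : G} : u ≤ v ↔ key u ≤ key v ∧ u ∈ zpowers (gen v) := Iff.rfl
  refine isPerfect_of_isClique_Iic
    (fun v x hx y hy hxy => ⟨hxy, gen v, (le_iff.mp hx).2, (le_iff.mp hy).2⟩) fun u v huv => ?_
  rcases le_total (key u) (key v) with h | h
  · exact .inl ⟨h, mem_zpowers_ite_of_adj_of_le ht htN hsq hkey_le huv h⟩
  · exact .inr ⟨h, mem_zpowers_ite_of_adj_of_le ht htN hsq hkey_le huv.symm h⟩

theorem mem_or_mul_mem_zpowers_of_closure_eq_top {a b : G} {m : ℕ}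
    (hconj : b * a * b⁻¹ = a ^ m) (hb : b ^ 2 = 1) (hgen : closure {a, b} = ⊤) (x : G) :
    x ∈ zpowers a ∨ x * b ∈ zpowers a := by
  have hbb : b * b = 1 := by rw [← sq, hb]
  have hbb' (z : G) : b * (b * z) = z := by rw [← mul_assoc, hbb, one_mul]
  have hbinv : b⁻¹ = b := inv_eq_of_mul_eq_one_right hbb
  have hnorm {y : G} (hy : y ∈ zpowers a) : b * y * b ∈ zpowers a := by
    obtain ⟨k, rfl⟩ := mem_zpowers_iff.mp hy
    rw [show b * a ^ k * b = b * a ^ k * b⁻¹ by rw [hbinv], ← conj_zpow, hconj]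
    exact zpow_mem (pow_mem (mem_zpowers a) m) k
  have hx : x ∈ closure {a, b} := hgen ▸ mem_top x
  induction hx using closure_induction with
  | mem y hy =>
    rcases hy with rfl | rfl
    · exact .inl (mem_zpowers y)
    · exact .inr (hbb ▸ one_mem _)
  | one => exact .inl (one_mem _)
  | mul x y _ _ hx hy =>
    rcases hx with hx | hx <;> rcases hy with hy | hy
    · exact .inl (mul_mem hx hy)
    · exact .inr (mul_assoc x y b ▸ mul_mem hx hy)
    · refine .inr ?_
      rw [show x * y * b = x * b * (b * y * b) by simp only [mul_assoc, hbb']]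
      exact mul_mem hx (hnorm hy)
    · refine .inl ?_
      rw [show x * y = x * b * (b * (y * b) * b) by simp only [mul_assoc, hbb', hbb, mul_one]]
      exact mul_mem hx (hnorm hy)
  | inv x _ hx =>
    rcases hx with hx | hx
    · exact .inl (inv_mem hx)
    · refine .inr ?_
      rw [show x⁻¹ * b = b * (x * b)⁻¹ * b by simp only [mul_inv_rev, hbinv, hbb']]
      exact hnorm (inv_mem hx)

theorem sq_mem_zpowers_pow_succ_of_not_mem {a b : G} {m : ℕ}
    (hconj : b * a * b⁻¹ = a ^ m) (hb : b ^ 2 = 1) (hgen : closure {a, b} = ⊤) {x : G}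
    (hx : x ∉ zpowers a) : x ^ 2 ∈ zpowers (a ^ (m + 1)) := by
  obtain ⟨k, hk⟩ := mem_zpowers_iff.mp
    ((mem_or_mul_mem_zpowers_of_closure_eq_top hconj hb hgen x).resolve_left hx)
  have hbinv : b⁻¹ = b := inv_eq_of_mul_eq_one_right (by rw [← sq, hb])
  obtain rfl : x = a ^ k * b := hbinv ▸ eq_mul_inv_of_mul_eq hk.symm
  refine mem_zpowers_iff.mpr ⟨k, ?_⟩
  calc (a ^ (m + 1)) ^ k = a ^ k * (b * a * b⁻¹) ^ k := by
        rw [hconj, ← zpow_natCast, ← zpow_natCast, ← zpow_mul, ← zpow_mul, ← zpow_add]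
        push_cast; ring_nf
    _ = (a ^ k * b) ^ 2 := by rw [conj_zpow, hbinv, sq]; group

end Group

theorem stmt_18_general {G : Type*} [Group G] [Fintype G] (n : ℕ) (hn : 2 ≤ n)
    (a b : G) (ha : a ^ (4 * n) = 1) (hb : b ^ 2 = 1) (hba : b * a = a ^ (2 * n - 1) * b)
    (hgen : Subgroup.closure {a, b} = ⊤) :
    IsPerfect (enhancedPowerGraph G) := by
  have hconj : b * a * b⁻¹ = a ^ (2 * n - 1) := by rw [hba, mul_inv_cancel_right]
  have ht : (a ^ (2 * n)) ^ 2 = 1 := by rw [← pow_mul, ← ha]; ring_nf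
  refine isPerfect_enhancedPowerGraph_of_sq_mem_zpowers ht (pow_mem (mem_zpowers a) _)
    fun x hx => ?_
  simpa only [Nat.sub_add_cancel (by omega : 1 ≤ 2 * n)] using
    sq_mem_zpowers_pow_succ_of_not_mem hconj hb hgen hx

/-- For every `n ≥ 2`, the enhanced power graph of the semidihedral group
`SD_{8n} = ⟨a, b : a^{4n} = b² = e, ba = a^{2n−1}b⟩` of order `8n` is a perfect graph. -/
theorem stmt_18 {G : Type*} [Group G] [Fintype G] (n : ℕ) (hn : 2 ≤ n)
    (a b : G) (ha : a ^ (4 * n) = 1) (hb : b ^ 2 = 1) (hba : b * a = a ^ (2 * n - 1) * b)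
    (hcard : Fintype.card G = 8 * n) (hgen : Subgroup.closure {a, b} = ⊤) :
    IsPerfect (enhancedPowerGraph G) :=
  stmt_18_general n hn a b ha hb hba hgen
end
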